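/- Let R be a finite, reduced, crystallographic root system spanning a finite-dimensional real inner product space V, with base S = {α₁,…,α_n}, positive roots R⁺, and Weyl group W generated by the simple reflections s_i = s_{α_i}. Fix j ∈ {1,…,n}. Let (i₁, i₂, …, i_t) be a sequence of indices in {1,…,n}, put w_l := s_{i_l} ⋯ s_{i₂} s_{i₁} for 1 ≤ l ≤ t, and define the roots α̃_0 := α_{i₁} and α̃_l := s_{i₁} s_{i₂} ⋯ s_{i_l}(α_{i_{l+1}}) for 1 ≤ l < t. Then the following are equivalent: (a) for every 0 ≤ l < t, the coefficient of α_j in the expansion of α̃_l in the base S is strictly positive; (b) for every 1 ≤ l ≤ t, the element w_l lies in W^j and the expression s_{i_l} ⋯ s_{i₁} is reduced, i.e. l(w_l) = l. -/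

import Mathlib

open scoped RealInnerProductSpace

/-- A finite, reduced, crystallographic root system `R` spanning a
finite-dimensional real inner product space `V`, together with a base `S`
(the simple roots), the corresponding set `Rpos` of positive roots,
the integer coefficients `coeff α γ` of a root `α` in the base `S`,
the integer coefficients `ccoeff α γ` of the coroot `α^∨ = (2/(α,α))•α` of a
positive root in the simple coroots, and the integer Cartan pairings
`cartan α β = ⟨α, β^∨⟩ = 2(α,β)/(β,β)`. -/
structure RootSystemWithBase (V : Type*) [NormedAddCommGroup V]
    [InnerProductSpace ℝ V] [FiniteDimensional ℝ V] where
  R : Finset V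
  S : Finset V
  Rpos : Finset V
  coeff : V → V → ℤ
  ccoeff : V → V → ℤ
  cartan : V → V → ℤ
  root_ne_zero : ∀ α ∈ R, α ≠ (0 : V)
  span_top : Submodule.span ℝ (R : Set V) = ⊤
  neg_mem : ∀ α ∈ R, -α ∈ R
  reduced : ∀ α ∈ R, ∀ c : ℝ, c • α ∈ (R : Set V) → c = 1 ∨ c = -1
  cartan_eq : ∀ α ∈ R, ∀ β ∈ R, (cartan α β : ℝ) = 2 * ⟪α, β⟫ / ⟪β, β⟫
  reflect_mem : ∀ α ∈ R, ∀ β ∈ R, β - cartan β α • α ∈ R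
  S_subset : ∀ γ ∈ S, γ ∈ Rpos
  Rpos_subset : ∀ α ∈ Rpos, α ∈ R
  S_indep : LinearIndependent ℝ (Subtype.val : {x // x ∈ S} → V)
  root_eq_sum : ∀ α ∈ R, α = ∑ γ ∈ S, coeff α γ • γ
  mem_Rpos_iff : ∀ α ∈ R, (α ∈ Rpos ↔ ∀ γ ∈ S, 0 ≤ coeff α γ)
  pos_or_neg : ∀ α ∈ R, α ∈ Rpos ∨ -α ∈ Rpos
  coroot_eq_sum : ∀ α ∈ Rpos,
    (2 / ⟪α, α⟫) • α = ∑ γ ∈ S, ccoeff α γ • ((2 / ⟪γ, γ⟫) • γ)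
  ccoeff_nonneg : ∀ α ∈ Rpos, ∀ γ ∈ S, 0 ≤ ccoeff α γ

namespace RootSystemWithBase

variable {V : Type*} [NormedAddCommGroup V] [InnerProductSpace ℝ V]
  [FiniteDimensional ℝ V] (D : RootSystemWithBase V)

/-- The coroot `α^∨ = 2α/(α,α)` of a root `α`. -/
noncomputable def coroot (_D : RootSystemWithBase V) (α : V) : V := (2 / ⟪α, α⟫) • α

/-- The height of the coroot of a positive root: the sum of its coefficients
in the basis of simple coroots. -/
def ht (α : V) : ℤ := ∑ γ ∈ D.S, D.ccoeff α γ

open Classical in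
/-- `R_P⁺`: the positive roots that are nonnegative integer combinations of
the elements of `SP`. -/
noncomputable def RP (SP : Finset V) : Finset V :=
  D.Rpos.filter fun α => ∃ c : V → ℤ, (∀ γ, 0 ≤ c γ) ∧ α = ∑ γ ∈ SP, c γ • γ

/-- `n_β := 2 - ⟨Σ_{α ∈ R_P⁺} α, β^∨⟩`. -/
noncomputable def n (SP : Finset V) (β : V) : ℤ := 2 - ∑ α ∈ D.RP SP, D.cartan α β

/-- The reflection `s_α` in a root `α`, as a map `V → V`. -/
noncomputable def refl (_D : RootSystemWithBase V) (α : V) (x : V) : V := x - (2 * ⟪x, α⟫ / ⟪α, α⟫) • α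

/-- `w : V → V` can be written as a composition of `t` simple reflections. -/
noncomputable def IsWord (w : V → V) (t : ℕ) : Prop :=
  ∃ b : Fin t → V, (∀ i, b i ∈ D.S) ∧
    w = (List.ofFn fun i => D.refl (b i)).foldr (· ∘ ·) id

/-- Membership in the Weyl group `W` (as a group of maps `V → V`): `w` is a
composition of simple reflections. -/
noncomputable def MemW (w : V → V) : Prop := ∃ t, D.IsWord w t

/-- The length of an element of the Weyl group: the smallest number of simple
reflections needed to express it. -/
noncomputable def len (w : V → V) : ℕ := sInf {t | D.IsWord w t}

/-- The inversion set `I(w) = {α ∈ R⁺ : w(α) ∈ -R⁺}`. -/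
def inversions (w : V → V) : Set V := {α | α ∈ D.Rpos ∧ -(w α) ∈ D.Rpos}

/-- `W^j = {w ∈ W : I(w) ⊆ R⁺ ∖ R_j}`, the minimal length representatives of
`W/W_j`, where `R_j` is the set of roots lying in the span of `S ∖ {β}`. -/
noncomputable def Wj (β : V) : Set (V → V) :=
  {w | D.MemW w ∧
    ∀ α ∈ D.inversions w, α ∉ Submodule.span ℝ ((D.S : Set V) \ {β})}

end RootSystemWithBase

/-!
Put `u_l = s_{b 0} ⋯ s_{b (l-1)}` and `w_l = u_l⁻¹`, so that `α̃_l = u_l(b l)` and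
`w_{l+1} = s_{b l} w_l`. If `α̃_l > 0`, the inversion set of `w_{l+1}` is that of `w_l` with the new
root `α̃_l` added; if `α̃_l < 0`, the deletion condition produces a word for `w_{l+1}` of length
`l - 1`. Under (a), therefore, `I(w_l) = {α̃_0, …, α̃_{l-1}}` has `l ≤ len w_l ≤ l` elements, all
with positive `β0`-coefficient, i.e. outside `R_j`. Under (b), no `α̃_l` can be negative, and the
positive root `α̃_l ∈ I(w_{l+1})` lies outside `R_j`, so its nonnegative `β0`-coefficient is
nonzero.
-/

lemma List.reverse_map_range_succ {α : Type*} (b : ℕ → α) (l : ℕ) :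
    ((List.range (l + 1)).map b).reverse = b l :: ((List.range l).map b).reverse := by
  simp [List.range_succ]

namespace RootSystemWithBase

variable {V : Type*} [NormedAddCommGroup V] [InnerProductSpace ℝ V]
  [FiniteDimensional ℝ V] (D : RootSystemWithBase V)

lemma refl_add (α x y : V) : D.refl α (x + y) = D.refl α x + D.refl α y := by
  simp only [refl, inner_add_left, mul_add, add_div, add_smul]
  abel

lemma refl_smul (α : V) (c : ℝ) (x : V) : D.refl α (c • x) = c • D.refl α x := by
  simp only [refl, real_inner_smul_left, smul_sub, smul_smul]
  ring_nf

lemma refl_neg (α x : V) : D.refl α (-x) = -D.refl α x := by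
  simpa using D.refl_smul α (-1) x

lemma refl_inner (α x y : V) : ⟪D.refl α x, D.refl α y⟫ = ⟪x, y⟫ := by
  by_cases hα : ⟪α, α⟫ = (0 : ℝ)
  · simp [refl, inner_self_eq_zero.mp hα]
  · simp only [refl, inner_sub_left, inner_sub_right, real_inner_smul_left,
      real_inner_smul_right, real_inner_comm y α, real_inner_comm α x]
    field_simp
    ring

lemma refl_refl (α x : V) : D.refl α (D.refl α x) = x := by
  by_cases hα : ⟪α, α⟫ = (0 : ℝ)
  · simp [refl, inner_self_eq_zero.mp hα]
  · simp only [refl, inner_sub_left, real_inner_smul_left, real_inner_comm α x]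
    field_simp
    ring_nf
    rw [mul_comm]
    module

lemma refl_self {α : V} (hα : α ≠ 0) : D.refl α α = -α := by
  rw [refl, mul_div_assoc, div_self (inner_self_ne_zero.mpr hα)]
  module

lemma refl_refl_comm (γ α x : V) :
    D.refl γ (D.refl α x) = D.refl (D.refl γ α) (D.refl γ x) := by
  have hlin : ∀ c : ℝ, D.refl γ (x - c • α) = D.refl γ x - c • D.refl γ α := fun c => by
    rw [sub_eq_add_neg, ← neg_smul, refl_add, refl_smul, neg_smul, ← sub_eq_add_neg]
  conv_rhs => rw [refl, refl_inner, refl_inner]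
  exact hlin _

lemma refl_mem_R {α β : V} (hα : α ∈ D.R) (hβ : β ∈ D.R) : D.refl α β ∈ D.R := by
  rw [refl, ← D.cartan_eq β hβ α hα, Int.cast_smul_eq_zsmul]
  exact D.reflect_mem α hα β hβ

lemma mem_R_of_mem_S {γ : V} (hγ : γ ∈ D.S) : γ ∈ D.R :=
  D.Rpos_subset γ (D.S_subset γ hγ)

noncomputable def simpleBasis : Module.Basis D.S ℝ V :=
  Module.Basis.mk D.S_indep <| by
    rw [Subtype.range_coe, ← D.span_top, Submodule.span_le]
    intro α hα
    rw [D.root_eq_sum α hα]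
    exact Submodule.sum_mem _ fun γ hγ =>
      Submodule.smul_of_tower_mem _ _ (Submodule.subset_span hγ)

lemma simpleBasis_apply (γ : D.S) : D.simpleBasis γ = γ := Module.Basis.mk_apply _ _ _

lemma coeff_eq_repr {α δ : V} (hα : α ∈ D.R) (hδ : δ ∈ D.S) :
    (D.coeff α δ : ℝ) = D.simpleBasis.repr α ⟨δ, hδ⟩ := by
  have hsum : α = ∑ γ : D.S, (D.coeff α γ : ℝ) • D.simpleBasis γ := by
    simp only [simpleBasis_apply, Int.cast_smul_eq_zsmul]
    rw [Finset.sum_coe_sort D.S fun γ => D.coeff α γ • γ]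
    exact D.root_eq_sum α hα
  conv_rhs => rw [hsum, Module.Basis.repr_sum_self]

lemma simpleBasis_repr_of_ne {γ δ : V} (hγ : γ ∈ D.S) (hδ : δ ∈ D.S) (hne : δ ≠ γ) :
    D.simpleBasis.repr γ ⟨δ, hδ⟩ = 0 := by
  have h := D.simpleBasis.repr_self ⟨γ, hγ⟩
  rw [simpleBasis_apply] at h
  rw [h, Finsupp.single_eq_of_ne (by simpa using hne)]

lemma coeff_neg {α δ : V} (hα : α ∈ D.R) (hδ : δ ∈ D.S) :
    D.coeff (-α) δ = -D.coeff α δ := by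
  have h := D.coeff_eq_repr (D.neg_mem α hα) hδ
  rw [map_neg, Finsupp.neg_apply, ← D.coeff_eq_repr hα hδ] at h
  exact_mod_cast h

lemma coeff_refl_of_ne {γ α δ : V} (hγ : γ ∈ D.S) (hα : α ∈ D.R) (hδ : δ ∈ D.S)
    (hne : δ ≠ γ) : D.coeff (D.refl γ α) δ = D.coeff α δ := by
  have h := D.coeff_eq_repr (D.refl_mem_R (D.mem_R_of_mem_S hγ) hα) hδ
  rw [refl, map_sub, map_smul, Finsupp.sub_apply, Finsupp.smul_apply,
    D.simpleBasis_repr_of_ne hγ hδ hne, smul_zero,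
    sub_zero, ← D.coeff_eq_repr hα hδ] at h
  exact_mod_cast h

lemma coeff_eq_zero_of_mem_span {α β0 : V} (hα : α ∈ D.R) (hβ0 : β0 ∈ D.S)
    (h : α ∈ Submodule.span ℝ ((D.S : Set V) \ {β0})) : D.coeff α β0 = 0 := by
  suffices D.simpleBasis.coord ⟨β0, hβ0⟩ α = 0 by
    exact_mod_cast (D.coeff_eq_repr hα hβ0).trans this
  refine (Submodule.span_le (p := LinearMap.ker (D.simpleBasis.coord ⟨β0, hβ0⟩))).mpr
    ?_ h
  rintro γ ⟨hγ, hne⟩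
  exact D.simpleBasis_repr_of_ne hγ hβ0 (Ne.symm hne)

lemma mem_span_of_coeff_eq_zero {α β0 : V} (hα : α ∈ D.R) (hβ0 : β0 ∈ D.S)
    (h : D.coeff α β0 = 0) : α ∈ Submodule.span ℝ ((D.S : Set V) \ {β0}) := by
  classical
  rw [D.root_eq_sum α hα, ← Finset.add_sum_erase _ _ hβ0, h, zero_smul, zero_add]
  refine Submodule.sum_mem _ fun γ hγ => Submodule.smul_of_tower_mem _ _ ?_
  apply Submodule.subset_span
  rw [← Finset.coe_erase]
  exact hγ

lemma neg_notMem_Rpos {α : V} (hα : α ∈ D.Rpos) : -α ∉ D.Rpos := by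
  intro hneg
  have hαR := D.Rpos_subset α hα
  have hzero : ∀ γ ∈ D.S, D.coeff α γ • γ = 0 := fun γ hγ => by
    have h1 := (D.mem_Rpos_iff α hαR).mp hα γ hγ
    have h2 := (D.mem_Rpos_iff _ (D.neg_mem α hαR)).mp hneg γ hγ
    rw [D.coeff_neg hαR hγ] at h2
    rw [show D.coeff α γ = 0 by omega, zero_smul]
  exact D.root_ne_zero α hαR (by rw [D.root_eq_sum α hαR, Finset.sum_eq_zero hzero])

lemma mem_Rpos_of_coeff_pos {α δ : V} (hα : α ∈ D.R) (hδ : δ ∈ D.S)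
    (h : 0 < D.coeff α δ) : α ∈ D.Rpos := by
  refine (D.pos_or_neg α hα).resolve_right fun hneg => ?_
  have := (D.mem_Rpos_iff _ (D.neg_mem α hα)).mp hneg δ hδ
  rw [D.coeff_neg hα hδ] at this
  omega

lemma exists_coeff_pos_of_ne {γ α : V} (hγ : γ ∈ D.S) (hα : α ∈ D.Rpos) (hne : α ≠ γ) :
    ∃ δ ∈ D.S, δ ≠ γ ∧ 0 < D.coeff α δ := by
  have hαR := D.Rpos_subset α hα
  have hnonneg := (D.mem_Rpos_iff α hαR).mp hα
  by_contra! hcon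
  have hαeq : α = (D.coeff α γ : ℝ) • γ := by
    conv_lhs => rw [D.root_eq_sum α hαR]
    rw [Finset.sum_eq_single_of_mem γ hγ fun δ hδ hδγ => ?_, Int.cast_smul_eq_zsmul]
    rw [show D.coeff α δ = 0 by have := hcon δ hδ hδγ; have := hnonneg δ hδ; omega,
      zero_smul]
  have hmem : (D.coeff α γ : ℝ) • γ ∈ (D.R : Set V) := by
    rw [← hαeq]
    exact hαR
  rcases D.reduced γ (D.mem_R_of_mem_S hγ) _ hmem with h | h
  · exact hne (by rw [hαeq, h, one_smul])
  · have := hnonneg γ hγ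
    have : D.coeff α γ = -1 := by exact_mod_cast h
    omega

lemma refl_mem_Rpos {γ α : V} (hγ : γ ∈ D.S) (hα : α ∈ D.Rpos) (hne : α ≠ γ) :
    D.refl γ α ∈ D.Rpos := by
  obtain ⟨δ, hδ, hδγ, hpos⟩ := D.exists_coeff_pos_of_ne hγ hα hne
  have hαR := D.Rpos_subset α hα
  refine D.mem_Rpos_of_coeff_pos (D.refl_mem_R (D.mem_R_of_mem_S hγ) hαR) hδ ?_
  rwa [D.coeff_refl_of_ne hγ hαR hδ hδγ]

noncomputable def wordProd (bs : List V) : V → V := bs.foldr (fun γ f => D.refl γ ∘ f) id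

@[simp] lemma wordProd_nil : D.wordProd [] = id := rfl

lemma wordProd_cons (γ : V) (bs : List V) : D.wordProd (γ :: bs) = D.refl γ ∘ D.wordProd bs :=
  rfl

lemma wordProd_append (xs ys : List V) :
    D.wordProd (xs ++ ys) = D.wordProd xs ∘ D.wordProd ys := by
  induction xs with
  | nil => rfl
  | cons γ tl ih => rw [List.cons_append, wordProd_cons, wordProd_cons, ih]; rfl

lemma wordProd_neg (bs : List V) (x : V) : D.wordProd bs (-x) = -D.wordProd bs x := by
  induction bs with
  | nil => rfl
  | cons γ tl ih => simp only [wordProd_cons, Function.comp_apply, ih, refl_neg]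

lemma wordProd_refl (bs : List V) (α x : V) :
    D.wordProd bs (D.refl α x) = D.refl (D.wordProd bs α) (D.wordProd bs x) := by
  induction bs with
  | nil => rfl
  | cons γ tl ih =>
    simp only [wordProd_cons, Function.comp_apply, ih]
    exact D.refl_refl_comm _ _ _

lemma wordProd_reverse_wordProd (bs : List V) (x : V) :
    D.wordProd bs.reverse (D.wordProd bs x) = x := by
  induction bs generalizing x with
  | nil => rfl
  | cons γ tl ih =>
    rw [List.reverse_cons, wordProd_append, Function.comp_apply, wordProd_cons,
      Function.comp_apply, wordProd_cons, Function.comp_apply, wordProd_nil, id, refl_refl, ih]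

lemma wordProd_wordProd_reverse (bs : List V) (x : V) :
    D.wordProd bs (D.wordProd bs.reverse x) = x := by
  simpa using D.wordProd_reverse_wordProd bs.reverse x

lemma wordProd_reverse_congr {xs ys : List V} (h : D.wordProd xs = D.wordProd ys) :
    D.wordProd xs.reverse = D.wordProd ys.reverse := by
  funext x
  calc D.wordProd xs.reverse x
      = D.wordProd ys.reverse (D.wordProd ys (D.wordProd xs.reverse x)) :=
        (D.wordProd_reverse_wordProd ys _).symm
    _ = D.wordProd ys.reverse x := by rw [← h, wordProd_wordProd_reverse]

lemma wordProd_mem_R {bs : List V} (hbs : ∀ γ ∈ bs, γ ∈ D.S) {x : V} (hx : x ∈ D.R) :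
    D.wordProd bs x ∈ D.R := by
  induction bs with
  | nil => exact hx
  | cons γ tl ih =>
    exact D.refl_mem_R (D.mem_R_of_mem_S (hbs γ List.mem_cons_self))
      (ih fun δ h => hbs δ (List.mem_cons_of_mem γ h))

lemma wordProd_eq_foldr (bs : List V) : D.wordProd bs = (bs.map D.refl).foldr (· ∘ ·) id := by
  induction bs with
  | nil => rfl
  | cons γ tl ih => rw [wordProd_cons, List.map_cons, List.foldr_cons, ih]

lemma isWord_iff_exists_list {g : V → V} {t : ℕ} :
    D.IsWord g t ↔
      ∃ bs : List V, bs.length = t ∧ (∀ γ ∈ bs, γ ∈ D.S) ∧ g = D.wordProd bs := by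
  constructor
  · rintro ⟨b, hb, rfl⟩
    refine ⟨List.ofFn b, List.length_ofFn, fun γ hγ => ?_, ?_⟩
    · obtain ⟨i, rfl⟩ := List.mem_ofFn.mp hγ
      exact hb i
    · rw [wordProd_eq_foldr, List.map_ofFn]
      rfl
  · rintro ⟨bs, rfl, hbs, rfl⟩
    refine ⟨bs.get, fun i => hbs _ (List.get_mem bs i), ?_⟩
    rw [wordProd_eq_foldr]
    conv_lhs => rw [← List.ofFn_get bs]
    rw [List.map_ofFn]
    rfl

lemma len_wordProd_le {bs : List V} (hbs : ∀ γ ∈ bs, γ ∈ D.S) :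
    D.len (D.wordProd bs) ≤ bs.length :=
  Nat.sInf_le (D.isWord_iff_exists_list.mpr ⟨bs, rfl, hbs, rfl⟩)

lemma memW_wordProd {bs : List V} (hbs : ∀ γ ∈ bs, γ ∈ D.S) : D.MemW (D.wordProd bs) :=
  ⟨_, D.isWord_iff_exists_list.mpr ⟨bs, rfl, hbs, rfl⟩⟩

open Classical in
noncomputable def inversionFinset (g : V → V) : Finset V :=
  D.Rpos.filter fun α => -(g α) ∈ D.Rpos

lemma mem_inversionFinset {g : V → V} {α : V} :
    α ∈ D.inversionFinset g ↔ α ∈ D.Rpos ∧ -(g α) ∈ D.Rpos := by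
  classical
  simp [inversionFinset]

lemma coe_inversionFinset (g : V → V) : (D.inversionFinset g : Set V) = D.inversions g := by
  ext α
  simp [inversions, mem_inversionFinset]

@[simp] lemma inversionFinset_id : D.inversionFinset id = ∅ :=
  Finset.eq_empty_of_forall_notMem fun _ hα =>
    D.neg_notMem_Rpos (D.mem_inversionFinset.mp hα).1 (D.mem_inversionFinset.mp hα).2

lemma wordProd_reverse_notMem_inversionFinset {γ : V} (hγ : γ ∈ D.S) (bs : List V) :
    D.wordProd bs.reverse γ ∉ D.inversionFinset (D.wordProd bs) := by
  rw [mem_inversionFinset, wordProd_wordProd_reverse]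
  exact fun h => D.neg_notMem_Rpos (D.S_subset γ hγ) h.2

lemma inversionFinset_refl_comp_subset [DecidableEq V] {bs : List V}
    (hbs : ∀ δ ∈ bs, δ ∈ D.S) {γ : V} (hγ : γ ∈ D.S) :
    D.inversionFinset (D.refl γ ∘ D.wordProd bs) ⊆
      insert (D.wordProd bs.reverse γ) (D.inversionFinset (D.wordProd bs)) := by
  intro α hα
  obtain ⟨hαpos, hneg⟩ := D.mem_inversionFinset.mp hα
  rw [Finset.mem_insert, mem_inversionFinset]
  by_cases hβ : D.wordProd bs α = γ
  · left
    rw [← hβ, wordProd_reverse_wordProd]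
  · right
    refine ⟨hαpos, (D.pos_or_neg _ (D.wordProd_mem_R hbs (D.Rpos_subset α hαpos))).resolve_left
      fun hpos => D.neg_notMem_Rpos (D.refl_mem_Rpos hγ hpos hβ) hneg⟩

lemma inversionFinset_refl_comp_of_mem_Rpos [DecidableEq V] {bs : List V}
    (hbs : ∀ δ ∈ bs, δ ∈ D.S) {γ : V} (hγ : γ ∈ D.S) (hpos : D.wordProd bs.reverse γ ∈ D.Rpos) :
    D.inversionFinset (D.refl γ ∘ D.wordProd bs) =
      insert (D.wordProd bs.reverse γ) (D.inversionFinset (D.wordProd bs)) := by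
  refine (D.inversionFinset_refl_comp_subset hbs hγ).antisymm
    (Finset.insert_subset_iff.mpr ⟨?_, fun α hα => ?_⟩)
  · rw [mem_inversionFinset, Function.comp_apply, wordProd_wordProd_reverse,
      D.refl_self (D.root_ne_zero γ (D.mem_R_of_mem_S hγ)), neg_neg]
    exact ⟨hpos, D.S_subset γ hγ⟩
  · obtain ⟨hαpos, hneg⟩ := D.mem_inversionFinset.mp hα
    have hne : -D.wordProd bs α ≠ γ := by
      intro h
      have hα' : -α = D.wordProd bs.reverse γ := by
        rw [← h, wordProd_neg, wordProd_reverse_wordProd]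
      exact D.neg_notMem_Rpos hαpos (hα' ▸ hpos)
    rw [mem_inversionFinset, Function.comp_apply, ← refl_neg]
    exact ⟨hαpos, D.refl_mem_Rpos hγ hneg hne⟩

lemma card_inversionFinset_wordProd_le {bs : List V} (hbs : ∀ γ ∈ bs, γ ∈ D.S) :
    (D.inversionFinset (D.wordProd bs)).card ≤ bs.length := by
  classical
  induction bs with
  | nil => simp
  | cons γ tl ih =>
    have htl : ∀ δ ∈ tl, δ ∈ D.S := fun δ h => hbs δ (List.mem_cons_of_mem γ h)
    calc (D.inversionFinset (D.wordProd (γ :: tl))).card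
        ≤ (insert (D.wordProd tl.reverse γ) (D.inversionFinset (D.wordProd tl))).card :=
          Finset.card_le_card (D.inversionFinset_refl_comp_subset htl (hbs γ List.mem_cons_self))
      _ ≤ (D.inversionFinset (D.wordProd tl)).card + 1 := Finset.card_insert_le _ _
      _ ≤ (γ :: tl).length := by simpa using ih htl

lemma card_inversionFinset_le_len {g : V → V} (hg : D.MemW g) :
    (D.inversionFinset g).card ≤ D.len g := by
  obtain ⟨bs, hlen, hbs, rfl⟩ := D.isWord_iff_exists_list.mp (Nat.sInf_mem hg)
  exact (D.card_inversionFinset_wordProd_le hbs).trans_eq hlen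

/-- The deletion condition. Inducting on `w = s_c w'`: if `w'(γ) > 0` but `s_c w'(γ) < 0`,
then `w'(γ) = c`, so `w' s_γ w'⁻¹ = s_c` cancels the front letter `c`. -/
lemma exists_shorter_wordProd_append_of_neg {bs : List V} (hbs : ∀ δ ∈ bs, δ ∈ D.S) {γ : V}
    (hγ : γ ∈ D.S) (hneg : -(D.wordProd bs γ) ∈ D.Rpos) :
    ∃ bs' : List V, bs'.length + 1 = bs.length ∧ (∀ δ ∈ bs', δ ∈ D.S) ∧
      D.wordProd (bs ++ [γ]) = D.wordProd bs' := by
  induction bs with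
  | nil => exact absurd hneg (D.neg_notMem_Rpos (D.S_subset γ hγ))
  | cons c tl ih =>
    have hc : c ∈ D.S := hbs c List.mem_cons_self
    have htl : ∀ δ ∈ tl, δ ∈ D.S := fun δ h => hbs δ (List.mem_cons_of_mem c h)
    by_cases htlneg : -(D.wordProd tl γ) ∈ D.Rpos
    · obtain ⟨tl', hlen, htl', heq⟩ := ih htl htlneg
      refine ⟨c :: tl', by simp [← hlen], List.forall_mem_cons.mpr ⟨hc, htl'⟩, ?_⟩
      rw [List.cons_append, wordProd_cons, heq, wordProd_cons]
    · have hpos : D.wordProd tl γ ∈ D.Rpos :=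
        (D.pos_or_neg _ (D.wordProd_mem_R htl (D.mem_R_of_mem_S hγ))).resolve_right htlneg
      have hc_eq : D.wordProd tl γ = c := by
        by_contra hne
        exact D.neg_notMem_Rpos (D.refl_mem_Rpos hc hpos hne) hneg
      refine ⟨tl, rfl, htl, funext fun x => ?_⟩
      rw [List.cons_append, wordProd_cons, wordProd_append, Function.comp_apply,
        Function.comp_apply]
      change D.refl c (D.wordProd tl (D.refl γ x)) = _
      rw [wordProd_refl, hc_eq, refl_refl]

lemma len_wordProd_cons_lt {bs : List V} (hbs : ∀ δ ∈ bs, δ ∈ D.S) {γ : V} (hγ : γ ∈ D.S)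
    (hneg : -(D.wordProd bs.reverse γ) ∈ D.Rpos) :
    D.len (D.wordProd (γ :: bs)) < bs.length := by
  obtain ⟨bs', hlen, hbs', heq⟩ := D.exists_shorter_wordProd_append_of_neg
    (fun δ h => hbs δ (List.mem_reverse.mp h)) hγ hneg
  have hword : D.wordProd (γ :: bs) = D.wordProd bs'.reverse := by
    simpa using D.wordProd_reverse_congr heq
  calc D.len (D.wordProd (γ :: bs)) ≤ bs'.reverse.length := by
        rw [hword]
        exact D.len_wordProd_le fun δ h => hbs' δ (List.mem_reverse.mp h)
    _ < bs.length := by simp only [List.length_reverse] at hlen ⊢; omega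

lemma mem_Wj_iff {β0 : V} (hβ0 : β0 ∈ D.S) {g : V → V} :
    g ∈ D.Wj β0 ↔ D.MemW g ∧ ∀ α ∈ D.inversions g, 0 < D.coeff α β0 := by
  refine and_congr_right fun _ => forall₂_congr fun α hα => ?_
  have hαR : α ∈ D.R := D.Rpos_subset α hα.1
  have hnonneg := (D.mem_Rpos_iff α hαR).mp hα.1 β0 hβ0
  exact ⟨fun h => hnonneg.lt_of_ne' fun h0 => h (D.mem_span_of_coeff_eq_zero hαR hβ0 h0),
    fun h hspan => h.ne' (D.coeff_eq_zero_of_mem_span hαR hβ0 hspan)⟩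

lemma eq_wordProd_range_of_comp_refl {b : ℕ → V} {u : ℕ → V → V} (h0 : u 0 = id)
    (hs : ∀ l, u (l + 1) = u l ∘ D.refl (b l)) :
    u = fun l => D.wordProd ((List.range l).map b) := by
  funext l
  induction l with
  | zero => exact h0
  | succ l ih => rw [hs, ih, List.range_succ, List.map_append, wordProd_append]; rfl

lemma eq_wordProd_reverse_range_of_refl_comp {b : ℕ → V} {w : ℕ → V → V} (h0 : w 0 = id)
    (hs : ∀ l, w (l + 1) = D.refl (b l) ∘ w l) :
    w = fun l => D.wordProd ((List.range l).map b).reverse := by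
  funext l
  induction l with
  | zero => exact h0
  | succ l ih => rw [hs, ih, List.reverse_map_range_succ, wordProd_cons]

lemma inversionFinset_wordProd_range_reverse {b : ℕ → V} {l : ℕ} (hb : ∀ m < l, b m ∈ D.S)
    (hpos : ∀ m < l, D.wordProd ((List.range m).map b) (b m) ∈ D.Rpos) :
    (D.inversionFinset (D.wordProd ((List.range l).map b).reverse)).card = l ∧
      ∀ α ∈ D.inversionFinset (D.wordProd ((List.range l).map b).reverse),
        ∃ m < l, α = D.wordProd ((List.range m).map b) (b m) := by
  classical
  induction l with
  | zero => simp [inversionFinset_id]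
  | succ l ih =>
    obtain ⟨hcard, hmem⟩ := ih (fun m hm => hb m (by omega)) fun m hm => hpos m (by omega)
    have hbs : ∀ γ ∈ ((List.range l).map b).reverse, γ ∈ D.S := by
      simpa using fun m hm => hb m (by omega)
    have hnew : D.wordProd ((List.range l).map b).reverse.reverse (b l) ∈ D.Rpos := by
      simpa using hpos l (by omega)
    rw [List.reverse_map_range_succ, wordProd_cons,
      D.inversionFinset_refl_comp_of_mem_Rpos hbs (hb l (by omega)) hnew]
    refine ⟨?_, fun α hα => ?_⟩
    · rw [Finset.card_insert_of_notMem (D.wordProd_reverse_notMem_inversionFinset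
        (hb l (by omega)) _), hcard]
    · rcases Finset.mem_insert.mp hα with rfl | hα
      · exact ⟨l, by omega, by simp⟩
      · obtain ⟨m, hm, rfl⟩ := hmem α hα
        exact ⟨m, by omega, rfl⟩

end RootSystemWithBase

/-- The sequence `(i₁, …, i_t)` is encoded by the simple roots `b 0, …, b (t-1)`, so that
`w l = s_{b (l-1)} ∘ ⋯ ∘ s_{b 0}`, `u l = s_{b 0} ∘ ⋯ ∘ s_{b (l-1)}` and `α̃_l = u l (b l)`. -/
theorem modified_kostant_game_iff_reduced_word {V : Type*}
    [NormedAddCommGroup V] [InnerProductSpace ℝ V] [FiniteDimensional ℝ V]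
    (D : RootSystemWithBase V) (β0 : V) (hβ0 : β0 ∈ D.S)
    (t : ℕ) (b : ℕ → V) (hb : ∀ l < t, b l ∈ D.S)
    (w u : ℕ → V → V)
    (hw0 : w 0 = id) (hwsucc : ∀ l, w (l + 1) = D.refl (b l) ∘ w l)
    (hu0 : u 0 = id) (husucc : ∀ l, u (l + 1) = u l ∘ D.refl (b l)) :
    ((∀ l < t, 0 < D.coeff (u l (b l)) β0) ↔
      (∀ l, 1 ≤ l → l ≤ t → w l ∈ D.Wj β0 ∧ D.len (w l) = l)) := by
  classical
  obtain rfl := D.eq_wordProd_reverse_range_of_refl_comp hw0 hwsucc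
  obtain rfl := D.eq_wordProd_range_of_comp_refl hu0 husucc
  have hword : ∀ l ≤ t, ∀ γ ∈ ((List.range l).map b).reverse, γ ∈ D.S := fun l hl => by
    simpa using fun m hm => hb m (by omega)
  have hroot : ∀ l < t, D.wordProd ((List.range l).map b) (b l) ∈ D.R := fun l hl =>
    D.wordProd_mem_R (by simpa using hword l hl.le) (D.mem_R_of_mem_S (hb l hl))
  simp only [D.mem_Wj_iff hβ0, ← D.coe_inversionFinset, Finset.mem_coe]
  constructor
  · intro ha l _ hl
    obtain ⟨hcard, hinv⟩ := D.inversionFinset_wordProd_range_reverse (l := l)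
      (fun m hm => hb m (by omega)) fun m hm =>
        D.mem_Rpos_of_coeff_pos (hroot m (by omega)) hβ0 (ha m (by omega))
    have hmem := D.memW_wordProd (hword l hl)
    refine ⟨⟨hmem, fun α hα => ?_⟩, le_antisymm ?_ ?_⟩
    · obtain ⟨m, hm, rfl⟩ := hinv α hα
      exact ha m (by omega)
    · simpa using D.len_wordProd_le (hword l hl)
    · exact hcard.symm.le.trans (D.card_inversionFinset_le_len hmem)
  · intro hw l hl
    obtain ⟨⟨-, hinv⟩, hlen⟩ := hw (l + 1) (by omega) (by omega)
    rw [List.reverse_map_range_succ] at hinv hlen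
    rcases D.pos_or_neg _ (hroot l hl) with hpos | hneg
    · refine hinv _ ?_
      rw [D.wordProd_cons, D.inversionFinset_refl_comp_of_mem_Rpos (hword l hl.le) (hb l hl)
        (by simpa using hpos), List.reverse_reverse]
      exact Finset.mem_insert_self _ _
    · have := D.len_wordProd_cons_lt (hword l hl.le) (hb l hl) (by simpa using hneg)
      rw [List.length_reverse, List.length_map, List.length_range] at this
      omega
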